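/- arXiv:1409.3214 — 3 statements merged into one kernel-verified Lean document; each statement's English description precedes it below -/
import Mathlib

section
/- Let L, M be complex polynomials with deg M < deg L =: ℓ, such that L(ik) is purely imaginary for all real k. Set q = ℓ - deg M. Then for every T > 0 there is a constant C > 0 such that for all d with 0 < d ≤ T and all real k, |d·M(ik) / (1 - d·L(ik))| ≤ C · d^{q/ℓ}. -/
/-!
Since `L(ik)` is purely imaginary, `w = 1 - d L(ik)` has real part `1`, so
`‖w‖ ≥ max 1 (d ‖L(ik)‖)`. With `m = deg M`, the polynomials `M ^ ℓ` and `L ^ m` have the same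
degree, so `‖M‖ ^ ℓ = O(‖L‖ ^ m)` at infinity and, by compactness, `‖M z‖ ^ ℓ ≤ C max(1, ‖L z‖) ^ m`
everywhere. Hence, for `d ≤ T`,
`(d ‖M‖) ^ ℓ ≤ C d ^ (ℓ - m) (d max(1, ‖L‖)) ^ m ≤ C max(1, T) ^ m d ^ (ℓ - m) ‖w‖ ^ ℓ`,
and taking `ℓ`-th roots gives the exponent `(ℓ - m) / ℓ`.
-/

open Complex
open Polynomial Asymptotics Bornology Filter

theorem exists_norm_eval_pow_le_mul_max_one_pow {𝕜 : Type*} [NontriviallyNormedField 𝕜]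
    [ProperSpace 𝕜] (P Q : 𝕜[X]) (hQ : Q ≠ 0) :
    ∃ C > 0, ∀ z : 𝕜, ‖P.eval z‖ ^ Q.natDegree ≤ C * max 1 ‖Q.eval z‖ ^ P.natDegree := by
  set f : 𝕜 → ℝ := fun z ↦ ‖P.eval z‖ ^ Q.natDegree / max 1 ‖Q.eval z‖ ^ P.natDegree
  have hmax_pos (z : 𝕜) : 0 < max 1 ‖Q.eval z‖ ^ P.natDegree := by positivity
  have hdeg : (P ^ Q.natDegree).degree ≤ (Q ^ P.natDegree).degree := by
    rw [degree_eq_natDegree (pow_ne_zero _ hQ), natDegree_pow, mul_comm, ← natDegree_pow]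
    exact degree_le_natDegree
  obtain ⟨c, hc_pos, hc⟩ := (isBigO_cobounded_of_degree_le hdeg).exists_pos
  have hf_bigO : f =O[cocompact 𝕜] (1 : 𝕜 → ℝ) := by
    refine isBigO_iff.2 ⟨c, ?_⟩
    rw [← Metric.cobounded_eq_cocompact]
    filter_upwards [hc.bound] with z hz
    simp only [eval_pow, norm_pow] at hz
    rw [Pi.one_apply, norm_one, mul_one, Real.norm_of_nonneg (by positivity)]
    refine div_le_of_le_mul₀ (hmax_pos z).le hc_pos.le (hz.trans ?_)
    gcongr
    exact le_max_right _ _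
  have hf_cont : Continuous f :=
    Continuous.div (by fun_prop) (by fun_prop) fun z ↦ (hmax_pos z).ne'
  obtain ⟨C, hC⟩ := isBounded_iff_forall_norm_le.1 (hf_cont.isBounded_range_iff_isBigO.2 hf_bigO)
  refine ⟨max C 1, by positivity, fun z ↦ ?_⟩
  have hfz : f z ≤ max C 1 := (le_abs_self _).trans ((hC (f z) ⟨z, rfl⟩).trans (le_max_left _ _))
  exact (div_le_iff₀ (hmax_pos z)).1 hfz

theorem max_one_mul_norm_le_norm_one_sub {x : ℂ} (hx : x.re = 0) {d : ℝ} (hd : 0 ≤ d) :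
    max 1 (d * ‖x‖) ≤ ‖1 - d * x‖ := by
  have hre : (1 - d * x).re = 1 := by simp [hx]
  have him : (1 - d * x).im = -(d * x.im) := by simp [hx]
  have hx_norm : ‖x‖ = |x.im| := by
    rw [← Complex.re_add_im x, hx]; simp
  refine max_le ?_ ?_
  · simpa [hre] using Complex.abs_re_le_norm (1 - d * x)
  · simpa [him, hx_norm, abs_mul, abs_of_nonneg hd] using Complex.abs_im_le_norm (1 - d * x)

theorem pow_mul_max_one_pow_le {m ℓ : ℕ} (hmℓ : m ≤ ℓ) {d T x : ℝ} (hd : 0 ≤ d) (hdT : d ≤ T) :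
    d ^ ℓ * max 1 x ^ m ≤ max 1 T ^ m * d ^ (ℓ - m) * max 1 (d * x) ^ ℓ := by
  have hmax : d * max 1 x ≤ max 1 T * max 1 (d * x) := by
    rw [mul_max_of_nonneg _ _ hd, mul_one]
    have hT : 1 ≤ max 1 T := le_max_left _ _
    have hdx : 1 ≤ max 1 (d * x) := le_max_left _ _
    exact max_le ((hdT.trans (le_max_right _ _)).trans (le_mul_of_one_le_right (by positivity) hdx))
      ((le_max_right _ _).trans (le_mul_of_one_le_left (by positivity) hT))
  calc d ^ ℓ * max 1 x ^ m = d ^ (ℓ - m) * (d * max 1 x) ^ m := by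
        rw [mul_pow, ← mul_assoc, ← pow_add, Nat.sub_add_cancel hmℓ]
    _ ≤ d ^ (ℓ - m) * (max 1 T ^ m * max 1 (d * x) ^ m) := by
        rw [← mul_pow]; gcongr
    _ ≤ max 1 T ^ m * d ^ (ℓ - m) * max 1 (d * x) ^ ℓ := by
        rw [← mul_assoc, mul_comm (d ^ _)]
        gcongr
        exact le_max_left _ _

theorem le_rpow_inv_mul_rpow_of_pow_le {m ℓ : ℕ} (hmℓ : m ≤ ℓ) (hℓ : ℓ ≠ 0) {a K d : ℝ}
    (ha : 0 ≤ a) (hK : 0 ≤ K) (hd : 0 ≤ d) (h : a ^ ℓ ≤ K * d ^ (ℓ - m)) :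
    a ≤ K ^ (ℓ : ℝ)⁻¹ * d ^ (((ℓ : ℝ) - m) / ℓ) := by
  calc a = (a ^ ℓ) ^ (ℓ : ℝ)⁻¹ := (Real.pow_rpow_inv_natCast ha hℓ).symm
    _ ≤ (K * d ^ (ℓ - m)) ^ (ℓ : ℝ)⁻¹ := by gcongr
    _ = K ^ (ℓ : ℝ)⁻¹ * d ^ (((ℓ : ℝ) - m) / ℓ) := by
        rw [Real.mul_rpow hK (by positivity), ← Real.rpow_natCast, ← Real.rpow_mul hd,
          Nat.cast_sub hmℓ, div_eq_mul_inv]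

/-- If `deg M < deg L = ℓ`, `q = ℓ - deg M`, and `L(ik)` is purely imaginary for all
real `k`, then for every `T > 0` there is `C > 0` with
`|d·M(ik)/(1 - d·L(ik))| ≤ C·d^(q/ℓ)` for all `0 < d ≤ T` and all real `k`. -/
theorem stmt_4 (L M : Polynomial ℂ) (hdeg : M.degree < L.degree)
    (him : ∀ k : ℝ, (L.eval (Complex.I * k)).re = 0) :
    ∀ T > (0 : ℝ), ∃ C > (0 : ℝ), ∀ d : ℝ, 0 < d → d ≤ T → ∀ k : ℝ,
      ‖(d : ℂ) * M.eval (Complex.I * k) /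
          (1 - (d : ℂ) * L.eval (Complex.I * k))‖ ≤
        C * d ^ (((L.natDegree : ℝ) - (M.natDegree : ℝ)) / (L.natDegree : ℝ)) := by
  intro T _
  rcases eq_or_ne M 0 with rfl | hM
  · exact ⟨1, one_pos, fun d hd _ k ↦ by simp [Real.rpow_nonneg hd.le]⟩
  have hmℓ : M.natDegree < L.natDegree := natDegree_lt_natDegree hM hdeg
  obtain ⟨C, hC, hMC⟩ := exists_norm_eval_pow_le_mul_max_one_pow M L (ne_zero_of_degree_gt hdeg)
  refine ⟨(C * max 1 T ^ M.natDegree) ^ (L.natDegree : ℝ)⁻¹, by positivity, fun d hd hdT k ↦ ?_⟩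
  set z := I * k
  have hw := max_one_mul_norm_le_norm_one_sub (him k) hd.le
  refine le_rpow_inv_mul_rpow_of_pow_le hmℓ.le (by omega) (norm_nonneg _) (by positivity) hd.le ?_
  rw [norm_div, norm_mul, Complex.norm_real, Real.norm_of_nonneg hd.le, div_pow,
    div_le_iff₀ (pow_pos (one_pos.trans_le ((le_max_left _ _).trans hw)) _)]
  calc (d * ‖M.eval z‖) ^ L.natDegree
      ≤ d ^ L.natDegree * (C * max 1 ‖L.eval z‖ ^ M.natDegree) := by
        rw [mul_pow]; gcongr; exact hMC z
    _ ≤ C * (max 1 T ^ M.natDegree * d ^ (L.natDegree - M.natDegree) *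
          max 1 (d * ‖L.eval z‖) ^ L.natDegree) := by
        rw [mul_left_comm]
        exact mul_le_mul_of_nonneg_left (pow_mul_max_one_pow_le hmℓ.le hd.le hdT) hC.le
    _ ≤ C * max 1 T ^ M.natDegree * d ^ (L.natDegree - M.natDegree) *
          ‖1 - (d : ℂ) * L.eval z‖ ^ L.natDegree := by
        rw [mul_assoc C, mul_assoc C]; gcongr
end

section
/- Let L, M be complex polynomials with deg M < deg L = ℓ and L(ik) imaginary for all real k, and define the rescaled polynomials L_c, M_c as above. Then the function R(c, x) = M_c(ix)/(1 - L_c(ix)) is uniformly bounded on [0, C₀] × ℝ for any C₀ > 0, where R is extended continuously by 0 at x = ∞. -/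
/-!
As `L(ik)` is purely imaginary for real `k`, so are the coefficients `bⱼ iʲ`, hence every
`L_c(ix)`; therefore `‖1 - L_c(ix)‖ ≥ max 1 ‖L_c(ix)‖`. For bounded `x` this gives
`|R| ≤ ‖M_c(ix)‖`, which is bounded uniformly in `c ∈ [0, C₀]`. For large `|x|` the top term
`b_ℓ (ix)^ℓ` of `L_c(ix)`, which does not involve `c`, dominates the others uniformly in `c`,
so `‖L_c(ix)‖ ≥ ‖b_ℓ‖ |x|^ℓ / 2`, while `‖M_c(ix)‖ = O(|x|^ℓ)`.
-/

open Complex ComplexConjugate Finset Polynomial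

/-- `p_c(ix)`, where `p_c(X) = ∑ⱼ c^(deg p - j) pⱼ Xʲ`. -/
noncomputable def rescaledEvalI (p : ℂ[X]) (c x : ℝ) : ℂ :=
  ∑ j ∈ range (p.natDegree + 1), (c : ℂ) ^ (p.natDegree - j) * p.coeff j * (I * x) ^ j

lemma re_coeff_eq_zero_of_re_eval_eq_zero {P : ℂ[X]} (h : ∀ k : ℝ, (P.eval (k : ℂ)).re = 0)
    (j : ℕ) : (P.coeff j).re = 0 := by
  -- `P + P̄` vanishes on the real line, hence is the zero polynomial.
  have hzero : P + P.map (starRingEnd ℂ) = 0 := by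
    refine eq_zero_of_infinite_isRoot _
      ((Set.infinite_range_of_injective ofReal_injective).mono ?_)
    rintro _ ⟨k, rfl⟩
    have hconj : (P.map (starRingEnd ℂ)).eval (k : ℂ) = conj (P.eval (k : ℂ)) := by
      rw [eval_map, ← eval₂_at_apply, conj_ofReal]
    rw [Set.mem_ofPred_eq, IsRoot, eval_add, hconj, add_conj, h k, mul_zero, ofReal_zero]
  have hj := congrArg (fun Q => (Q.coeff j).re) hzero
  simp only [coeff_add, coeff_map, add_re, conj_re, coeff_zero, zero_re] at hj
  linarith

lemma re_coeff_mul_I_pow_eq_zero {p : ℂ[X]} (h : ∀ k : ℝ, (p.eval (I * k)).re = 0) (j : ℕ) :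
    (p.coeff j * I ^ j).re = 0 := by
  rw [← comp_C_mul_X_coeff]
  exact re_coeff_eq_zero_of_re_eval_eq_zero (by simpa using h) j

lemma re_rescaledEvalI_eq_zero {p : ℂ[X]} (h : ∀ k : ℝ, (p.eval (I * k)).re = 0) (c x : ℝ) :
    (rescaledEvalI p c x).re = 0 := by
  rw [rescaledEvalI, re_sum]
  refine sum_eq_zero fun j _ => ?_
  have hterm : (c : ℂ) ^ (p.natDegree - j) * p.coeff j * (I * x) ^ j
      = ((c ^ (p.natDegree - j) * x ^ j : ℝ) : ℂ) * (p.coeff j * I ^ j) := by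
    push_cast
    ring
  rw [hterm, re_ofReal_mul, re_coeff_mul_I_pow_eq_zero h j, mul_zero]

lemma one_le_norm_one_sub_of_re_eq_zero {z : ℂ} (hz : z.re = 0) : 1 ≤ ‖1 - z‖ := by
  simpa [hz] using abs_re_le_norm (1 - z)

lemma norm_le_norm_one_sub_of_re_eq_zero {z : ℂ} (hz : z.re = 0) : ‖z‖ ≤ ‖1 - z‖ := by
  simpa [← abs_im_eq_norm.mpr hz] using abs_im_le_norm (1 - z)

lemma pow_abs_mul_norm_sum_le {s : Finset ℕ} {a : ℕ → ℂ} {m n k : ℕ} {c C x : ℝ} (hc : 0 ≤ c)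
    (hcC : c ≤ C) (hC : 1 ≤ C) (hm : m ≤ n) (hs : ∀ j ∈ s, j + k ≤ n) :
    |x| ^ k * ‖∑ j ∈ s, (c : ℂ) ^ (m - j) * a j * (I * x) ^ j‖
      ≤ C ^ n * (∑ j ∈ s, ‖a j‖) * max 1 |x| ^ n := by
  have hterm : ∀ j ∈ s, |x| ^ k * ‖(c : ℂ) ^ (m - j) * a j * (I * x) ^ j‖
      ≤ C ^ n * ‖a j‖ * max 1 |x| ^ n := by
    intro j hj
    have hcpow : c ^ (m - j) ≤ C ^ n :=
      (pow_le_pow_left₀ hc hcC _).trans (pow_le_pow_right₀ hC ((m.sub_le j).trans hm))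
    have hxpow : |x| ^ (j + k) ≤ max 1 |x| ^ n :=
      (pow_le_pow_left₀ (abs_nonneg x) (le_max_right 1 |x|) _).trans
        (pow_le_pow_right₀ (le_max_left 1 |x|) (hs j hj))
    calc |x| ^ k * ‖(c : ℂ) ^ (m - j) * a j * (I * x) ^ j‖
        = c ^ (m - j) * ‖a j‖ * |x| ^ (j + k) := by
          simp only [norm_mul, norm_pow, norm_real, norm_I, Real.norm_eq_abs, abs_of_nonneg hc,
            one_mul, pow_add]
          ring
      _ ≤ C ^ n * ‖a j‖ * max 1 |x| ^ n := by gcongr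
  calc |x| ^ k * ‖∑ j ∈ s, (c : ℂ) ^ (m - j) * a j * (I * x) ^ j‖
      ≤ ∑ j ∈ s, |x| ^ k * ‖(c : ℂ) ^ (m - j) * a j * (I * x) ^ j‖ := by
        rw [← mul_sum]
        gcongr
        exact norm_sum_le _ _
    _ ≤ ∑ j ∈ s, C ^ n * ‖a j‖ * max 1 |x| ^ n := sum_le_sum hterm
    _ = C ^ n * (∑ j ∈ s, ‖a j‖) * max 1 |x| ^ n := by rw [← sum_mul, ← mul_sum]

lemma exists_norm_rescaledEvalI_le (q : ℂ[X]) {n : ℕ} (hn : q.natDegree ≤ n) (C₀ : ℝ) :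
    ∃ A, 0 ≤ A ∧ ∀ c x : ℝ, 0 ≤ c → c ≤ C₀ → ‖rescaledEvalI q c x‖ ≤ A * max 1 |x| ^ n := by
  refine ⟨max 1 C₀ ^ n * ∑ j ∈ range (q.natDegree + 1), ‖q.coeff j‖, by positivity,
    fun c x hc hcC => ?_⟩
  simpa [rescaledEvalI] using pow_abs_mul_norm_sum_le (k := 0) hc
    (hcC.trans (le_max_right 1 C₀)) (le_max_left 1 C₀) hn
    fun j hj => (Nat.lt_succ_iff.mp (mem_range.mp hj)).trans hn

lemma exists_le_norm_rescaledEvalI {p : ℂ[X]} (hp : p ≠ 0) (C₀ : ℝ) :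
    ∃ X₀, 1 ≤ X₀ ∧ ∀ c x : ℝ, 0 ≤ c → c ≤ C₀ → X₀ ≤ |x| →
      ‖p.leadingCoeff‖ / 2 * |x| ^ p.natDegree ≤ ‖rescaledEvalI p c x‖ := by
  set ℓ := p.natDegree
  set b := ‖p.leadingCoeff‖
  have hb : 0 < b := norm_pos_iff.mpr (leadingCoeff_ne_zero.mpr hp)
  set B := max 1 C₀ ^ ℓ * ∑ j ∈ range ℓ, ‖p.coeff j‖
  refine ⟨max 1 (2 * B / b), le_max_left _ _, fun c x hc hcC hx => ?_⟩
  have hx1 : 1 ≤ |x| := (le_max_left _ _).trans hx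
  have hB : B ≤ b / 2 * |x| := by
    have := (le_max_right _ _).trans hx
    rw [div_le_iff₀ hb] at this
    linarith
  set tail := ∑ j ∈ range ℓ, (c : ℂ) ^ (ℓ - j) * p.coeff j * (I * x) ^ j
  have htail : ‖tail‖ ≤ b / 2 * |x| ^ ℓ := by
    refine le_of_mul_le_mul_left ?_ (zero_lt_one.trans_le hx1)
    have hsum := pow_abs_mul_norm_sum_le (s := range ℓ) (x := x) (a := p.coeff) (m := ℓ) (k := 1)
      hc (hcC.trans (le_max_right 1 C₀)) (le_max_left 1 C₀) le_rfl fun j hj => mem_range.mp hj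
    rw [pow_one, max_eq_right hx1] at hsum
    calc |x| * ‖tail‖ ≤ B * |x| ^ ℓ := hsum
      _ ≤ b / 2 * |x| * |x| ^ ℓ := by gcongr
      _ = |x| * (b / 2 * |x| ^ ℓ) := by ring
  have htop : ‖(c : ℂ) ^ (ℓ - ℓ) * p.coeff ℓ * (I * x) ^ ℓ‖ = b * |x| ^ ℓ := by
    simp [b, ℓ, norm_pow, norm_I, coeff_natDegree]
  have hsplit : rescaledEvalI p c x = tail + (c : ℂ) ^ (ℓ - ℓ) * p.coeff ℓ * (I * x) ^ ℓ :=
    sum_range_succ _ _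
  have htri := norm_sub_norm_le ((c : ℂ) ^ (ℓ - ℓ) * p.coeff ℓ * (I * x) ^ ℓ) (-tail)
  rw [sub_neg_eq_add, norm_neg, htop, add_comm] at htri
  rw [hsplit]
  linarith

theorem exists_norm_rescaledEvalI_div_le {p q : ℂ[X]} (hp : p ≠ 0)
    (hqp : q.natDegree ≤ p.natDegree) (him : ∀ k : ℝ, (p.eval (I * k)).re = 0) (C₀ : ℝ) :
    ∃ K, ∀ c x : ℝ, 0 ≤ c → c ≤ C₀ →
      ‖rescaledEvalI q c x / (1 - rescaledEvalI p c x)‖ ≤ K := by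
  obtain ⟨A, hA, hnum⟩ := exists_norm_rescaledEvalI_le q hqp C₀
  obtain ⟨X₀, hX₀, hden⟩ := exists_le_norm_rescaledEvalI hp C₀
  set b := ‖p.leadingCoeff‖
  have hb : 0 < b := norm_pos_iff.mpr (leadingCoeff_ne_zero.mpr hp)
  refine ⟨max (A * X₀ ^ p.natDegree) (2 * A / b), fun c x hc hcC => ?_⟩
  have hre := re_rescaledEvalI_eq_zero him c x
  rw [norm_div]
  rcases le_total |x| X₀ with hx | hx
  · calc ‖rescaledEvalI q c x‖ / ‖1 - rescaledEvalI p c x‖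
        ≤ ‖rescaledEvalI q c x‖ :=
          div_le_self (norm_nonneg _) (one_le_norm_one_sub_of_re_eq_zero hre)
      _ ≤ A * max 1 |x| ^ p.natDegree := hnum c x hc hcC
      _ ≤ A * X₀ ^ p.natDegree := by gcongr; exact max_le hX₀ hx
      _ ≤ _ := le_max_left _ _
  · have hx1 : 1 ≤ |x| := hX₀.trans hx
    have hnum' := hnum c x hc hcC
    rw [max_eq_right hx1] at hnum'
    calc ‖rescaledEvalI q c x‖ / ‖1 - rescaledEvalI p c x‖
        ≤ A * |x| ^ p.natDegree / (b / 2 * |x| ^ p.natDegree) :=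
          div_le_div₀ (by positivity) hnum' (by positivity)
            ((hden c x hc hcC hx).trans (norm_le_norm_one_sub_of_re_eq_zero hre))
      _ = 2 * A / b := by field_simp
      _ ≤ _ := le_max_right _ _

theorem stmt_6_general (L M : Polynomial ℂ) (hdeg : M.degree < L.degree)
    (him : ∀ k : ℝ, (L.eval (Complex.I * k)).re = 0)
    (C₀ : ℝ) :
    ∃ K : ℝ, ∀ c x : ℝ, 0 ≤ c → c ≤ C₀ →
      ‖((∑ j ∈ Finset.range (M.natDegree + 1),
            (c : ℂ) ^ (M.natDegree - j) * M.coeff j * (Complex.I * x) ^ j) /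
          (1 - ∑ j ∈ Finset.range (L.natDegree + 1),
            (c : ℂ) ^ (L.natDegree - j) * L.coeff j * (Complex.I * x) ^ j))‖ ≤ K :=
  exists_norm_rescaledEvalI_div_le (ne_zero_of_degree_gt hdeg) (natDegree_le_natDegree hdeg.le)
    him C₀

/-- With `L_c(X) = ∑ c^(ℓ-j) bⱼ Xʲ` and `M_c(X) = ∑ c^(ℓ-q-j) aⱼ Xʲ` (note
`ℓ - q = deg M`), the family of rational functions `R(c,x) = M_c(ix)/(1 - L_c(ix))`
is uniformly bounded on `[0, C₀] × ℝ` for any `C₀ > 0`. -/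
theorem stmt_6 (L M : Polynomial ℂ) (hdeg : M.degree < L.degree)
    (him : ∀ k : ℝ, (L.eval (Complex.I * k)).re = 0)
    (C₀ : ℝ) (hC₀ : 0 < C₀) :
    ∃ K : ℝ, ∀ c x : ℝ, 0 ≤ c → c ≤ C₀ →
      ‖((∑ j ∈ Finset.range (M.natDegree + 1),
            (c : ℂ) ^ (M.natDegree - j) * M.coeff j * (Complex.I * x) ^ j) /
          (1 - ∑ j ∈ Finset.range (L.natDegree + 1),
            (c : ℂ) ^ (L.natDegree - j) * L.coeff j * (Complex.I * x) ^ j))‖ ≤ K :=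
  stmt_6_general L M hdeg him C₀
end

section
/- If u, v : ℝ² → ℝ are C² functions satisfying the system u_t = v_x + 2 sin(u/2) cos(v/2) and v_t = u_x - 2 cos(u/2) sin(v/2), then u satisfies the Sine-Gordon equation u_tt = u_xx + sin(u). -/
/-!
Differentiate the first equation in `t` and the second in `x`. By symmetry of the second
derivative of `v`, the mixed derivatives `v_xt` and `v_tx` cancel, and substituting the system
once more for `u_t - v_x` and `u_x - v_t` leaves
`u_tt - u_xx = 2 sin (u/2) cos (u/2) (cos² (v/2) + sin² (v/2)) = sin u`.
-/

open Real Function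

section Slices

variable {E : Type*} [NormedAddCommGroup E] [NormedSpace ℝ E]

theorem hasDerivAt_slice_fst {F : ℝ × ℝ → E} {x t : ℝ} (hF : DifferentiableAt ℝ F (x, t)) :
    HasDerivAt (fun ξ => F (ξ, t)) (fderiv ℝ F (x, t) (1, 0)) x :=
  hF.hasFDerivAt.comp_hasDerivAt x ((hasDerivAt_id x).prodMk (hasDerivAt_const x t))

theorem hasDerivAt_slice_snd {F : ℝ × ℝ → E} {x t : ℝ} (hF : DifferentiableAt ℝ F (x, t)) :
    HasDerivAt (fun τ => F (x, τ)) (fderiv ℝ F (x, t) (0, 1)) t :=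
  hF.hasFDerivAt.comp_hasDerivAt t ((hasDerivAt_const t x).prodMk (hasDerivAt_id t))

variable {f : ℝ → ℝ → E}

theorem DifferentiableAt.slice_fst {x t : ℝ} (hf : DifferentiableAt ℝ (uncurry f) (x, t)) :
    DifferentiableAt ℝ (fun ξ => f ξ t) x :=
  (hasDerivAt_slice_fst hf).differentiableAt

theorem DifferentiableAt.slice_snd {x t : ℝ} (hf : DifferentiableAt ℝ (uncurry f) (x, t)) :
    DifferentiableAt ℝ (fun τ => f x τ) t :=
  (hasDerivAt_slice_snd hf).differentiableAt

theorem ContDiff.uncurry_deriv_fst {m n : WithTop ℕ∞} (hf : ContDiff ℝ n (uncurry f))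
    (hmn : m + 1 ≤ n) : ContDiff ℝ m (uncurry fun ξ τ => deriv (fun ξ' => f ξ' τ) ξ) := by
  have hf1 : Differentiable ℝ (uncurry f) :=
    (hf.of_le (le_add_self.trans hmn)).differentiable one_ne_zero
  have h : (uncurry fun ξ τ => deriv (fun ξ' => f ξ' τ) ξ) =
      fun p => fderiv ℝ (uncurry f) p (1, 0) :=
    funext fun p => (hasDerivAt_slice_fst (hf1 p)).deriv
  rw [h]
  exact (hf.fderiv_right hmn).clm_apply contDiff_const

theorem deriv_deriv_comm (hf : ContDiff ℝ 2 (uncurry f)) (x t : ℝ) :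
    deriv (fun τ => deriv (fun ξ => f ξ τ) x) t = deriv (fun ξ => deriv (fun τ => f ξ τ) t) x := by
  have hf1 : Differentiable ℝ (uncurry f) := hf.differentiable (by norm_num)
  have hf2 : Differentiable ℝ (fderiv ℝ (uncurry f)) :=
    (hf.fderiv_right (m := 1) le_rfl).differentiable one_ne_zero
  calc deriv (fun τ => deriv (fun ξ => f ξ τ) x) t
      = deriv (fun τ => fderiv ℝ (uncurry f) (x, τ) (1, 0)) t := by
        congr 1; funext τ; exact (hasDerivAt_slice_fst (hf1 (x, τ))).deriv
    _ = fderiv ℝ (fderiv ℝ (uncurry f)) (x, t) (0, 1) (1, 0) := by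
        simpa using ((hasDerivAt_slice_snd (hf2 (x, t))).clm_apply (hasDerivAt_const t _)).deriv
    _ = fderiv ℝ (fderiv ℝ (uncurry f)) (x, t) (1, 0) (0, 1) :=
        hf.contDiffAt.isSymmSndFDerivAt (by simp) _ _
    _ = deriv (fun ξ => fderiv ℝ (uncurry f) (ξ, t) (0, 1)) x := by
        simpa using ((hasDerivAt_slice_fst (hf2 (x, t))).clm_apply (hasDerivAt_const x _)).deriv.symm
    _ = deriv (fun ξ => deriv (fun τ => f ξ τ) t) x := by
        congr 1; funext ξ; exact (hasDerivAt_slice_snd (hf1 (ξ, t))).deriv.symm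

end Slices

theorem hasDerivAt_two_mul_sin_half_mul_cos_half {a b : ℝ → ℝ} {a' b' s : ℝ}
    (ha : HasDerivAt a a' s) (hb : HasDerivAt b b' s) :
    HasDerivAt (fun τ => 2 * sin (a τ / 2) * cos (b τ / 2))
      (cos (a s / 2) * cos (b s / 2) * a' - sin (a s / 2) * sin (b s / 2) * b') s :=
  (((ha.div_const 2).sin.const_mul 2).mul (hb.div_const 2).cos).congr_deriv (by ring)

theorem sin_eq_two_mul_sin_half_mul_cos_half (x : ℝ) : sin x = 2 * sin (x / 2) * cos (x / 2) := by
  rw [← sin_two_mul, mul_div_cancel₀ x two_ne_zero]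

/-- If `u, v : ℝ² → ℝ` are `C²` and satisfy `u_t = v_x + 2 sin(u/2) cos(v/2)` and
`v_t = u_x - 2 cos(u/2) sin(v/2)`, then `u` satisfies the Sine-Gordon equation
`u_tt = u_xx + sin u`.  Here `u x t` denotes `u(x,t)`. -/
theorem stmt_14 (u v : ℝ → ℝ → ℝ)
    (hu : ContDiff ℝ 2 (Function.uncurry u)) (hv : ContDiff ℝ 2 (Function.uncurry v))
    (heq1 : ∀ x t : ℝ, deriv (fun τ => u x τ) t =
      deriv (fun ξ => v ξ t) x + 2 * Real.sin (u x t / 2) * Real.cos (v x t / 2))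
    (heq2 : ∀ x t : ℝ, deriv (fun τ => v x τ) t =
      deriv (fun ξ => u ξ t) x - 2 * Real.cos (u x t / 2) * Real.sin (v x t / 2)) :
    ∀ x t : ℝ, deriv (fun τ => deriv (fun τ' => u x τ') τ) t =
      deriv (fun ξ => deriv (fun ξ' => u ξ' t) ξ) x + Real.sin (u x t) := by
  intro x t
  have hu1 : Differentiable ℝ (uncurry u) := hu.differentiable (by norm_num)
  have hv1 : Differentiable ℝ (uncurry v) := hv.differentiable (by norm_num)
  have hux1 := (hu.uncurry_deriv_fst (m := 1) le_rfl).differentiable one_ne_zero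
  have hvx1 := (hv.uncurry_deriv_fst (m := 1) le_rfl).differentiable one_ne_zero
  have hutt : deriv (fun τ => deriv (fun τ' => u x τ') τ) t =
      deriv (fun τ => deriv (fun ξ => v ξ τ) x) t
        + (cos (u x t / 2) * cos (v x t / 2) * deriv (fun τ => u x τ) t
          - sin (u x t / 2) * sin (v x t / 2) * deriv (fun τ => v x τ) t) :=
    (congrArg (deriv · t) (funext (heq1 x))).trans ((hvx1 (x, t)).slice_snd.hasDerivAt.add
      (hasDerivAt_two_mul_sin_half_mul_cos_half (hu1 (x, t)).slice_snd.hasDerivAt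
        (hv1 (x, t)).slice_snd.hasDerivAt)).deriv
  have hvtx : deriv (fun ξ => deriv (fun τ => v ξ τ) t) x =
      deriv (fun ξ => deriv (fun ξ' => u ξ' t) ξ) x
        - (cos (v x t / 2) * cos (u x t / 2) * deriv (fun ξ => v ξ t) x
          - sin (v x t / 2) * sin (u x t / 2) * deriv (fun ξ => u ξ t) x) := by
    have hvt : (fun ξ => deriv (fun τ => v ξ τ) t) = fun ξ =>
        deriv (fun ξ' => u ξ' t) ξ - 2 * sin (v ξ t / 2) * cos (u ξ t / 2) :=
      funext fun ξ => (heq2 ξ t).trans (by ring)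
    exact (congrArg (deriv · x) hvt).trans ((hux1 (x, t)).slice_fst.hasDerivAt.sub
      (hasDerivAt_two_mul_sin_half_mul_cos_half (hv1 (x, t)).slice_fst.hasDerivAt
        (hu1 (x, t)).slice_fst.hasDerivAt)).deriv
  rw [hutt, deriv_deriv_comm hv, hvtx, heq1 x t, heq2 x t,
    sin_eq_two_mul_sin_half_mul_cos_half (u x t)]
  linear_combination 2 * sin (u x t / 2) * cos (u x t / 2) * sin_sq_add_cos_sq (v x t / 2)
end
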